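/- Let n ≥ 10, let B = ((1/n²)·I_n + A)^{-1}, let R₁ > 0, and let x, z ∈ ℝ satisfy |x| ≤ R₁ and |z| ≤ R₁. Then the vector y* = B·b_{x,z}, where b_{x,z} = x·e₁ - (1/2)·z·e_n, satisfies |y*_i| ≤ 30·n·R₁ for every 1 ≤ i ≤ n. -/

import Mathlib

/-!
Testing `(α • 1 + A) *ᵥ y = b` against `y` gives the energy identity
`α ‖y‖² + ∑ (y_{k+1} - y_k)² = x y₁ - z yₙ / 2 =: E`, which also shows that `α • 1 + A` is
injective, so `B` is its genuine inverse. Any two coordinates differ by at most the total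
variation `∑ |y_{k+1} - y_k|`; averaging over the coordinates and Cauchy–Schwarz give
`y_i² ≤ 2 n E` when `α = 1 / n²`. With `E ≤ (3/2) R₁ max(|y₁|, |yₙ|)` this forces
`|y_i| ≤ 3 n R₁`.
-/

open Matrix

/-- The `n × n` tridiagonal matrix with `A 1 1 = A n n = 1`, diagonal `2` otherwise,
off-diagonal entries `-1`, and all other entries `0` (0-indexed in Lean). -/
noncomputable def triA (n : ℕ) : Matrix (Fin n) (Fin n) ℝ :=
  Matrix.of fun i j =>
    if i = j then (if (i : ℕ) = 0 ∨ (i : ℕ) = n - 1 then 1 else 2)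
    else if (i : ℕ) + 1 = (j : ℕ) ∨ (j : ℕ) + 1 = (i : ℕ) then -1 else 0

/-- `B = (α I + A)⁻¹`. -/
noncomputable def Bmat (n : ℕ) (α : ℝ) : Matrix (Fin n) (Fin n) ℝ :=
  (α • (1 : Matrix (Fin n) (Fin n) ℝ) + triA n)⁻¹

/-- `b_{x,z} = x·e₁ - (1/2)·z·eₙ`. -/
noncomputable def bvec (n : ℕ) (x z : ℝ) : Fin n → ℝ := fun i =>
  if (i : ℕ) = 0 then x else if (i : ℕ) = n - 1 then -(1 / 2) * z else 0

open Finset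

section Variation

variable {G : Type*} [AddCommGroup G] [LinearOrder G] [IsOrderedAddMonoid G] (Y : ℕ → G)

lemma abs_sub_le_sum_abs_sub_succ_of_le {a b N : ℕ} (hab : a ≤ b) (hbN : b ≤ N) :
    |Y b - Y a| ≤ ∑ k ∈ range N, |Y (k + 1) - Y k| := by
  have htel : Y b - Y a = ∑ k ∈ Ico a b, (Y (k + 1) - Y k) := by
    rw [sum_Ico_eq_sub _ hab, sum_range_sub, sum_range_sub]
    abel
  rw [htel]
  refine (abs_sum_le_sum_abs _ _).trans <|
    sum_le_sum_of_subset_of_nonneg (fun k hk => ?_) fun _ _ _ => abs_nonneg _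
  rw [mem_Ico] at hk
  exact mem_range.mpr (by omega)

lemma abs_sub_le_sum_abs_sub_succ {a b N : ℕ} (ha : a ≤ N) (hb : b ≤ N) :
    |Y b - Y a| ≤ ∑ k ∈ range N, |Y (k + 1) - Y k| := by
  rcases le_total a b with hab | hba
  · exact abs_sub_le_sum_abs_sub_succ_of_le Y hab hb
  · rw [abs_sub_comm]
    exact abs_sub_le_sum_abs_sub_succ_of_le Y hba ha

end Variation

section DiscreteSobolev

variable (Y : ℕ → ℝ)

lemma sq_sum_abs_sub_succ_le (N : ℕ) :
    (∑ k ∈ range N, |Y (k + 1) - Y k|) ^ 2 ≤ N * ∑ k ∈ range N, (Y (k + 1) - Y k) ^ 2 := by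
  simpa only [card_range, sq_abs] using
    sq_sum_le_card_mul_sum_sq (s := range N) (f := fun k => |Y (k + 1) - Y k|)

lemma sq_le_sum_sq_add_sum_sq_sub_succ {n i : ℕ} (hi : i < n) :
    Y i ^ 2 ≤ 2 / n * ∑ j ∈ range n, Y j ^ 2
      + 2 * n * ∑ k ∈ range (n - 1), (Y (k + 1) - Y k) ^ 2 := by
  set S := ∑ j ∈ range n, Y j ^ 2
  set D := ∑ k ∈ range (n - 1), (Y (k + 1) - Y k) ^ 2
  set s := ∑ k ∈ range (n - 1), |Y (k + 1) - Y k|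
  have hn : (0 : ℝ) < n := by exact_mod_cast (Nat.zero_le i).trans_lt hi
  have hpoint : ∀ j ∈ range n, Y i ^ 2 ≤ 2 * Y j ^ 2 + 2 * s ^ 2 := by
    intro j hj
    have hij := abs_le.mp <| abs_sub_le_sum_abs_sub_succ Y (N := n - 1) (a := j) (b := i)
      (by rw [mem_range] at hj; omega) (by omega)
    nlinarith [sq_nonneg (Y i - 2 * Y j)]
  have hsum : n * Y i ^ 2 ≤ 2 * S + n * (2 * s ^ 2) := by
    simpa only [sum_const, card_range, nsmul_eq_mul, sum_add_distrib, ← mul_sum]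
      using sum_le_sum hpoint
  have hs : s ^ 2 ≤ n * D := by
    refine (sq_sum_abs_sub_succ_le Y (n - 1)).trans (mul_le_mul_of_nonneg_right ?_ ?_)
    · exact_mod_cast Nat.sub_le n 1
    · exact sum_nonneg fun _ _ => sq_nonneg _
  refine le_of_mul_le_mul_left ?_ hn
  calc n * Y i ^ 2 ≤ 2 * S + n * (2 * s ^ 2) := hsum
    _ ≤ 2 * S + n * (2 * (n * D)) := by gcongr
    _ = n * (2 / n * S + 2 * n * D) := by field_simp

lemma abs_le_of_energy_eq {n : ℕ} {R x z : ℝ} (hx : |x| ≤ R) (hz : |z| ≤ R)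
    (hE : ((n : ℝ) ^ 2)⁻¹ * ∑ k ∈ range n, Y k ^ 2 + ∑ k ∈ range (n - 1), (Y (k + 1) - Y k) ^ 2
      = x * Y 0 - 1 / 2 * z * Y (n - 1))
    {i : ℕ} (hi : i < n) : |Y i| ≤ 3 * n * R := by
  set E := ((n : ℝ) ^ 2)⁻¹ * ∑ k ∈ range n, Y k ^ 2 + ∑ k ∈ range (n - 1), (Y (k + 1) - Y k) ^ 2
    with hEdef
  have hn : (0 : ℝ) < n := by exact_mod_cast (Nat.zero_le i).trans_lt hi
  have hE0 : 0 ≤ E := by positivity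
  set u := √(2 * n * E)
  have hu : ∀ j < n, |Y j| ≤ u := fun j hj => Real.abs_le_sqrt <| by
    convert sq_le_sum_sq_add_sum_sq_sub_succ Y hj using 1
    rw [hEdef]
    field_simp
  have hEu : E ≤ 3 / 2 * R * u := by
    have h0 := hu 0 (by omega)
    have h1 := hu (n - 1) (by omega)
    rw [hE]
    nlinarith [abs_le.mp h0, abs_le.mp h1, abs_le.mp hx, abs_le.mp hz, abs_nonneg x, abs_nonneg z]
  have hu2 : u ^ 2 = 2 * n * E := Real.sq_sqrt (by positivity)
  have hR : 0 ≤ R := (abs_nonneg x).trans hx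
  have huu : u * u ≤ 3 * n * R * u := by
    nlinarith [mul_le_mul_of_nonneg_left hEu (by positivity : (0 : ℝ) ≤ 2 * n)]
  have hc : 0 ≤ 3 * n * R := by positivity
  have hu_le : u ≤ 3 * n * R := by nlinarith
  exact (hu i hi).trans hu_le

end DiscreteSobolev

section Tridiagonal

variable {n : ℕ}

def extendByZero {M : Type*} [Zero M] (v : Fin n → M) (k : ℕ) : M :=
  if h : k < n then v ⟨k, h⟩ else 0

@[simp]
lemma extendByZero_val {M : Type*} [Zero M] (v : Fin n → M) (i : Fin n) :
    extendByZero v i = v i := by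
  simp [extendByZero]

lemma dotProduct_eq_sum_range {R : Type*} [NonUnitalNonAssocSemiring R] (v w : Fin n → R) :
    v ⬝ᵥ w = ∑ k ∈ range n, extendByZero v k * extendByZero w k := by
  rw [dotProduct, ← Fin.sum_univ_eq_sum_range]
  simp

lemma triA_mulVec_apply (hn : 2 ≤ n) (v : Fin n → ℝ) (i : Fin n) :
    (triA n *ᵥ v) i =
      (if (i : ℕ) = 0 then 0 else extendByZero v i - extendByZero v (i - 1))
        + (if (i : ℕ) = n - 1 then 0 else extendByZero v i - extendByZero v (i + 1)) := by
  set F : ℕ → ℝ := fun j =>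
    (if j = i then (if (i : ℕ) = 0 ∨ (i : ℕ) = n - 1 then 1 else 2) * extendByZero v i else 0)
      - (if j = i + 1 then extendByZero v (i + 1) else 0)
      - (if (i : ℕ) = 0 then 0 else if j = i - 1 then extendByZero v (i - 1) else 0) with hF
  have hentry : ∀ j : Fin n, triA n i j * v j = F j := by
    intro j
    rw [hF, ← extendByZero_val v j]
    simp only [triA, of_apply, Fin.ext_iff]
    generalize extendByZero v = V
    generalize (i : ℕ) = I at *
    generalize (j : ℕ) = J at *
    split_ifs <;> first | omega | (subst_vars; ring)
  rw [mulVec, dotProduct, sum_congr rfl fun j _ => hentry j, Fin.sum_univ_eq_sum_range F n, hF]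
  have hi := i.isLt
  split_ifs <;> simp only [sum_sub_distrib, sum_ite_eq', mem_range, sum_const_zero]
    <;> split_ifs <;> first | omega | ring

lemma dotProduct_triA_mulVec (hn : 2 ≤ n) (v : Fin n → ℝ) :
    v ⬝ᵥ (triA n *ᵥ v)
      = ∑ k ∈ range (n - 1), (extendByZero v (k + 1) - extendByZero v k) ^ 2 := by
  obtain ⟨m, rfl⟩ : ∃ m, n = m + 1 := ⟨n - 1, by omega⟩
  rw [dotProduct, sum_congr rfl fun i _ => by rw [triA_mulVec_apply hn, ← extendByZero_val v i],
    Fin.sum_univ_eq_sum_range (fun i => extendByZero v i *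
      ((if i = 0 then 0 else extendByZero v i - extendByZero v (i - 1))
        + (if i = m + 1 - 1 then 0 else extendByZero v i - extendByZero v (i + 1))))]
  simp only [Nat.add_sub_cancel, mul_add, sum_add_distrib]
  rw [sum_range_succ', sum_range_succ]
  simp only [Nat.add_sub_cancel, Nat.add_one_ne_zero, if_true, if_false, mul_zero, add_zero]
  rw [← sum_add_distrib]
  refine sum_congr rfl fun k hk => ?_
  rw [if_neg (mem_range.mp hk).ne]
  ring

lemma dotProduct_smul_one_add_triA_mulVec (hn : 2 ≤ n) (α : ℝ) (v : Fin n → ℝ) :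
    v ⬝ᵥ ((α • 1 + triA n) *ᵥ v)
      = α * (v ⬝ᵥ v) + ∑ k ∈ range (n - 1), (extendByZero v (k + 1) - extendByZero v k) ^ 2 := by
  rw [add_mulVec, dotProduct_add, smul_mulVec, one_mulVec, dotProduct_smul, smul_eq_mul,
    dotProduct_triA_mulVec hn]

lemma isUnit_smul_one_add_triA (hn : 2 ≤ n) {α : ℝ} (hα : 0 < α) :
    IsUnit (α • (1 : Matrix (Fin n) (Fin n) ℝ) + triA n) := by
  refine mulVec_injective_iff_isUnit.mp <|
    (injective_iff_map_eq_zero (α • 1 + triA n).mulVecLin).mpr fun v hv => ?_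
  have henergy := dotProduct_smul_one_add_triA_mulVec hn α v
  rw [mulVecLin_apply] at hv
  rw [hv, dotProduct_zero] at henergy
  have hvv : v ⬝ᵥ v = 0 := by
    have hD : 0 ≤ ∑ k ∈ range (n - 1), (extendByZero v (k + 1) - extendByZero v k) ^ 2 :=
      sum_nonneg fun _ _ => sq_nonneg _
    have hvv0 : 0 ≤ v ⬝ᵥ v := sum_nonneg fun i _ => mul_self_nonneg (v i)
    nlinarith
  exact dotProduct_self_eq_zero.mp hvv

lemma smul_one_add_triA_mulVec_Bmat (hn : 2 ≤ n) {α : ℝ} (hα : 0 < α) (b : Fin n → ℝ) :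
    (α • 1 + triA n) *ᵥ (Bmat n α *ᵥ b) = b := by
  rw [Bmat, mulVec_mulVec, mul_nonsing_inv _ ((isUnit_smul_one_add_triA hn hα).map detMonoidHom),
    one_mulVec]

lemma dotProduct_bvec (hn : 2 ≤ n) (x z : ℝ) (v : Fin n → ℝ) :
    v ⬝ᵥ bvec n x z = x * extendByZero v 0 - 1 / 2 * z * extendByZero v (n - 1) := by
  rw [dotProduct, Fintype.sum_eq_add ⟨0, by omega⟩ ⟨n - 1, by omega⟩ (by simp [Fin.ext_iff]; omega)]
  · simp [bvec, extendByZero, show n - 1 ≠ 0 by omega, show 0 < n by omega]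
    ring
  · rintro j ⟨hj0, hjn⟩
    simp only [ne_eq, Fin.ext_iff] at hj0 hjn
    simp [bvec, hj0, hjn]

end Tridiagonal

theorem stmt_12 (n : ℕ) (hn : 10 ≤ n) (R1 : ℝ)
    (x z : ℝ) (hx : |x| ≤ R1) (hz : |z| ≤ R1) (i : Fin n) :
    |(Bmat n (((n : ℝ) ^ 2)⁻¹)).mulVec (bvec n x z) i| ≤ 30 * n * R1 := by
  have hn2 : 2 ≤ n := by omega
  have hn0 : (0 : ℝ) < n := by exact_mod_cast (show 0 < n by omega)
  set y := Bmat n ((n : ℝ) ^ 2)⁻¹ *ᵥ bvec n x z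
  have henergy : y ⬝ᵥ ((((n : ℝ) ^ 2)⁻¹ • 1 + triA n) *ᵥ y) = y ⬝ᵥ bvec n x z := by
    rw [smul_one_add_triA_mulVec_Bmat hn2 (by positivity)]
  rw [dotProduct_smul_one_add_triA_mulVec hn2, dotProduct_bvec hn2, dotProduct_eq_sum_range y y]
    at henergy
  simp only [← sq] at henergy
  have hbound := abs_le_of_energy_eq (extendByZero y) hx hz henergy i.isLt
  rw [extendByZero_val] at hbound
  have hR : 0 ≤ R1 := (abs_nonneg x).trans hx
  calc |y i| ≤ 3 * n * R1 := hbound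
    _ ≤ 30 * n * R1 := by gcongr; norm_num
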